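/- Let n ≥ 1, V ≡ 0 and f(u) = |u|^{p−2}u − |u|^{q−2}u with 2 < p < q and p < 2 + 4/n. Then for every c > 0 the infimum m(c) satisfies −∞ < m(c) < 0, and m is strictly decreasing on ]0, ∞[. -/

import Mathlib

open Filter Set Topology MeasureTheory

noncomputable section

/-- the double-power energy `E(u) = ∫ (½|∇u|² - (1/p)|u|^p + (1/q)|u|^q)` -/
def energyPQ (n : ℕ) (p q : ℝ) (u : EuclideanSpace ℝ (Fin n) → ℝ) : ℝ :=
  ∫ x, ((1/2) * ‖fderiv ℝ u x‖ ^ 2 - (1/p) * |u x| ^ p + (1/q) * |u x| ^ q)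

/-- the mass `Q(u) = ½ ∫ |u|²` -/
def massPQ (n : ℕ) (u : EuclideanSpace ℝ (Fin n) → ℝ) : ℝ := (1/2) * ∫ x, (u x) ^ 2

/-- membership in `H¹(ℝⁿ)` -/
def inH1PQ (n : ℕ) (u : EuclideanSpace ℝ (Fin n) → ℝ) : Prop :=
  Differentiable ℝ u ∧ MemLp u 2 volume ∧ MemLp (fun x => fderiv ℝ u x) 2 volume

/-- `m(c) = inf {E(u) : u ∈ H¹(ℝⁿ), Q(u) = c}` -/
def minEPQ (n : ℕ) (p q : ℝ) (c : ℝ) : ℝ :=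
  sInf (energyPQ n p q '' {u | inH1PQ n u ∧ massPQ n u = c})


section Aux19
open Real

abbrev Eu (n : ℕ) := EuclideanSpace ℝ (Fin n)

def gss (n : ℕ) (a b : ℝ) (x : Eu n) : ℝ := a * rexp (-b * ‖x‖^2)

lemma integrable_gexp (n : ℕ) {k : ℝ} (hk : 0 < k) :
    Integrable (fun x : Eu n => rexp (-k * ‖x‖^2)) := by
  have h := GaussianFourier.integrable_cexp_neg_mul_sq_norm_add
    (b := (k:ℂ)) (by simpa using hk) 0 (0 : Eu n)
  have h2 := h.norm
  refine h2.congr (Filter.EventuallyEq.of_eq ?_)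
  funext x
  simp
  rw [Complex.norm_exp]
  norm_num
  left
  norm_cast

lemma integral_gexp (n : ℕ) {k : ℝ} (hk : 0 < k) :
    ∫ x : Eu n, rexp (-k * ‖x‖^2) = (π / k) ^ ((n:ℝ)/2) := by
  rw [GaussianFourier.integral_rexp_neg_mul_sq_norm hk]
  simp [finrank_euclideanSpace_fin]

lemma gss_hasFDerivAt (n : ℕ) (a b : ℝ) (x : Eu n) :
    HasFDerivAt (gss n a b)
      (a • (rexp (-b * ‖x‖^2) • ((-b) • (2 • innerSL ℝ x)))) x := by
  have h1 : HasFDerivAt (fun y : Eu n => ‖y‖^2) (2 • innerSL ℝ x) x :=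
    (hasStrictFDerivAt_norm_sq x).hasFDerivAt
  have h2 := (h1.const_mul (-b)).exp.const_mul a
  unfold gss
  simpa [mul_comm, neg_mul] using h2

lemma gss_fderiv (n : ℕ) (a b : ℝ) (x : Eu n) :
    fderiv ℝ (gss n a b) x = a • (rexp (-b * ‖x‖^2) • ((-b) • (2 • innerSL ℝ x))) :=
  (gss_hasFDerivAt n a b x).fderiv

lemma gss_differentiable (n : ℕ) (a b : ℝ) : Differentiable ℝ (gss n a b) :=
  fun x => (gss_hasFDerivAt n a b x).differentiableAt

lemma gss_fderiv_norm (n : ℕ) {a b : ℝ} (ha : 0 ≤ a) (hb : 0 ≤ b) (x : Eu n) :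
    ‖fderiv ℝ (gss n a b) x‖ = 2 * a * b * ‖x‖ * rexp (-b * ‖x‖^2) := by
  have h2s : (2:ℕ) • (innerSL ℝ x) = (2:ℝ) • (innerSL ℝ x) :=
    (Nat.cast_smul_eq_nsmul ℝ 2 _).symm
  rw [gss_fderiv, h2s, norm_smul, norm_smul, norm_smul, norm_smul]
  simp [abs_of_nonneg ha, abs_of_nonneg hb, Real.abs_exp, innerSL_apply_norm]
  ring

lemma gss_abs_rpow (n : ℕ) {a b : ℝ} (ha : 0 < a) (r : ℝ) (x : Eu n) :
    |gss n a b x| ^ r = a ^ r * rexp (-(r*b) * ‖x‖^2) := by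
  have h1 : |gss n a b x| = a * rexp (-b * ‖x‖^2) := by
    rw [gss, abs_of_pos (by positivity)]
  rw [h1, Real.mul_rpow ha.le (Real.exp_nonneg _), ← Real.exp_mul]
  ring_nf

lemma gss_sq (n : ℕ) {a b : ℝ} (x : Eu n) :
    (gss n a b x) ^ (2:ℕ) = a ^ (2:ℕ) * rexp (-(2*b) * ‖x‖^2) := by
  rw [gss, mul_pow, ← Real.exp_nat_mul]
  ring_nf

lemma gss_fderiv_normsq (n : ℕ) {a b : ℝ} (ha : 0 < a) (hb : 0 < b) (x : Eu n) :
    ‖fderiv ℝ (gss n a b) x‖ ^ (2:ℕ)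
      = 4 * a^2 * b^2 * ‖x‖^2 * rexp (-(2*b) * ‖x‖^2) := by
  rw [gss_fderiv_norm n ha.le hb.le]
  have h : rexp (-b*‖x‖^2) ^ (2:ℕ) = rexp (-(2*b)*‖x‖^2) := by
    rw [← Real.exp_nat_mul]; ring_nf
  rw [mul_pow, mul_pow, mul_pow, h]
  ring

lemma gss_fderiv_normsq_le (n : ℕ) {a b : ℝ} (ha : 0 < a) (hb : 0 < b) (x : Eu n) :
    ‖fderiv ℝ (gss n a b) x‖ ^ (2:ℕ) ≤ 4 * a^2 * b * rexp (-b * ‖x‖^2) := by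
  rw [gss_fderiv_normsq n ha hb]
  have ht : (0:ℝ) ≤ b * ‖x‖^2 := by positivity
  have h1 : b * ‖x‖^2 * rexp (-(b * ‖x‖^2)) ≤ 1 := by
    rw [Real.exp_neg, mul_inv_le_iff₀ (Real.exp_pos _), one_mul]
    linarith [Real.add_one_le_exp (b * ‖x‖^2)]
  have he : rexp (-(2*b) * ‖x‖^2) = rexp (-(b*‖x‖^2)) * rexp (-(b*‖x‖^2)) := by
    rw [← Real.exp_add]; ring_nf
  have he2 : rexp (-b * ‖x‖^2) = rexp (-(b*‖x‖^2)) := by ring_nf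
  rw [he, he2]
  have hexp : (0:ℝ) ≤ rexp (-(b*‖x‖^2)) := (Real.exp_pos _).le
  nlinarith [mul_le_mul_of_nonneg_right h1 hexp, sq_nonneg a,
    mul_pos (mul_pos (by positivity : (0:ℝ) < 4*a^2) hb) (Real.exp_pos (-(b*‖x‖^2)))]

section GaussInt
variable (n : ℕ) {a b : ℝ} (ha : 0 < a) (hb : 0 < b)

include hb in
lemma integrable_gss_sq : Integrable (fun x : Eu n => (gss n a b x) ^ (2:ℕ)) := by
  have : (fun x : Eu n => (gss n a b x) ^ (2:ℕ))
      = fun x : Eu n => a ^ (2:ℕ) * rexp (-(2*b) * ‖x‖^2) := funext fun x => gss_sq n x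
  rw [this]
  exact (integrable_gexp n (by linarith)).const_mul _

include hb in
lemma integral_gss_sq : ∫ x : Eu n, (gss n a b x) ^ (2:ℕ)
    = a ^ (2:ℕ) * (π / (2*b)) ^ ((n:ℝ)/2) := by
  have : (fun x : Eu n => (gss n a b x) ^ (2:ℕ))
      = fun x : Eu n => a ^ (2:ℕ) * rexp (-(2*b) * ‖x‖^2) := funext fun x => gss_sq n x
  rw [this, integral_const_mul, integral_gexp n (by linarith)]

include ha hb in
lemma integrable_gss_rpow {r : ℝ} (hr : 0 < r) :
    Integrable (fun x : Eu n => |gss n a b x| ^ r) := by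
  have : (fun x : Eu n => |gss n a b x| ^ r)
      = fun x : Eu n => a ^ r * rexp (-(r*b) * ‖x‖^2) :=
    funext fun x => gss_abs_rpow n ha r x
  rw [this]
  exact (integrable_gexp n (by positivity)).const_mul _

include ha hb in
lemma integral_gss_rpow {r : ℝ} (hr : 0 < r) :
    ∫ x : Eu n, |gss n a b x| ^ r = a ^ r * (π / (r*b)) ^ ((n:ℝ)/2) := by
  have : (fun x : Eu n => |gss n a b x| ^ r)
      = fun x : Eu n => a ^ r * rexp (-(r*b) * ‖x‖^2) :=
    funext fun x => gss_abs_rpow n ha r x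
  rw [this, integral_const_mul, integral_gexp n (by positivity)]

include ha hb in
lemma gss_normsq_eq : (fun x : Eu n => ‖fderiv ℝ (gss n a b) x‖ ^ (2:ℕ))
    = fun x : Eu n => (2 * a * b * ‖x‖ * rexp (-b * ‖x‖^2))^(2:ℕ) :=
  funext fun x => by rw [gss_fderiv_norm n ha.le hb.le]

include ha hb in
lemma integrable_gss_gradsq :
    Integrable (fun x : Eu n => ‖fderiv ℝ (gss n a b) x‖ ^ (2:ℕ)) := by
  refine Integrable.mono ((integrable_gexp n hb).const_mul (4*a^2*b)) ?_ ?_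
  · rw [gss_normsq_eq n ha hb]
    apply Continuous.aestronglyMeasurable
    continuity
  · refine Filter.Eventually.of_forall fun x => ?_
    rw [Real.norm_eq_abs, Real.norm_eq_abs, abs_of_nonneg (by positivity),
      abs_of_nonneg (by positivity)]
    exact gss_fderiv_normsq_le n ha hb x

include ha hb in
lemma integral_gss_gradsq_le :
    ∫ x : Eu n, ‖fderiv ℝ (gss n a b) x‖ ^ (2:ℕ)
      ≤ 4 * a^2 * b * (π / b) ^ ((n:ℝ)/2) := by
  calc ∫ x : Eu n, ‖fderiv ℝ (gss n a b) x‖ ^ (2:ℕ)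
      ≤ ∫ x : Eu n, 4 * a^2 * b * rexp (-b * ‖x‖^2) :=
        integral_mono (integrable_gss_gradsq n ha hb)
          ((integrable_gexp n hb).const_mul _) (gss_fderiv_normsq_le n ha hb)
    _ = 4 * a^2 * b * (π / b) ^ ((n:ℝ)/2) := by
        rw [integral_const_mul, integral_gexp n hb]

include ha hb in
lemma gss_inH1 : inH1PQ n (gss n a b) := by
  refine ⟨gss_differentiable n a b, ?_, ?_⟩
  · rw [memLp_two_iff_integrable_sq ((gss_differentiable n a b).continuous.aestronglyMeasurable)]
    exact integrable_gss_sq n hb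
  · have hmeas : AEStronglyMeasurable (fun x : Eu n => fderiv ℝ (gss n a b) x) volume :=
      (measurable_fderiv ℝ _).aestronglyMeasurable
    rw [memLp_two_iff_integrable_sq_norm hmeas]
    exact integrable_gss_gradsq n ha hb

include hb in
lemma gss_mass : massPQ n (gss n a b) = 1/2 * (a ^ (2:ℕ) * (π / (2*b)) ^ ((n:ℝ)/2)) := by
  rw [massPQ, integral_gss_sq n hb]

include ha hb in
lemma gss_energy_le (p q : ℝ) (hp : 0 < p) (hq : 0 < q) :
    energyPQ n p q (gss n a b) ≤
      2 * a^2 * b * (π / b) ^ ((n:ℝ)/2)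
      - (1/p) * (a ^ p * (π / (p*b)) ^ ((n:ℝ)/2))
      + (1/q) * (a ^ q * (π / (q*b)) ^ ((n:ℝ)/2)) := by
  have h1 : Integrable (fun x : Eu n => (1/2) * ‖fderiv ℝ (gss n a b) x‖ ^ (2:ℕ)) :=
    (integrable_gss_gradsq n ha hb).const_mul _
  have h2 : Integrable (fun x : Eu n => (1/p) * |gss n a b x| ^ p) :=
    (integrable_gss_rpow n ha hb hp).const_mul _
  have h3 : Integrable (fun x : Eu n => (1/q) * |gss n a b x| ^ q) :=
    (integrable_gss_rpow n ha hb hq).const_mul _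
  have hsplit : energyPQ n p q (gss n a b)
      = (∫ x : Eu n, (1/2) * ‖fderiv ℝ (gss n a b) x‖ ^ (2:ℕ))
        - (∫ x : Eu n, (1/p) * |gss n a b x| ^ p)
        + ∫ x : Eu n, (1/q) * |gss n a b x| ^ q := by
    unfold energyPQ
    have hadd := integral_add (μ := volume)
      (f := fun x : Eu n => 1/2 * ‖fderiv ℝ (gss n a b) x‖ ^ 2 - 1/p * |gss n a b x| ^ p)
      (g := fun x : Eu n => 1/q * |gss n a b x| ^ q) (h1.sub h2) h3
    rw [hadd, integral_sub h1 h2]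
  rw [hsplit, integral_const_mul, integral_const_mul, integral_const_mul,
    integral_gss_rpow n ha hb hp, integral_gss_rpow n ha hb hq]
  have hT := integral_gss_gradsq_le n ha hb
  linarith

end GaussInt

lemma exists_small_neg (K CP CR e1 e2 : ℝ) (hK : 0 ≤ K) (hCP : 0 < CP) (hCR : 0 ≤ CR)
    (he1 : 0 < e1) (he2 : 0 < e2) :
    ∃ b : ℝ, 0 < b ∧ K * b ^ e1 - CP + CR * b ^ e2 < 0 := by
  have t0 : ∀ e : ℝ, 0 < e → Tendsto (fun b : ℝ => b ^ e) (𝓝[>] (0:ℝ)) (𝓝 0) := by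
    intro e he
    have hc : ContinuousAt (fun x : ℝ => x ^ e) 0 :=
      Real.continuousAt_rpow_const 0 e (Or.inr he.le)
    have := hc.tendsto
    rw [Real.zero_rpow he.ne'] at this
    exact this.mono_left nhdsWithin_le_nhds
  have t : Tendsto (fun b : ℝ => K * b ^ e1 - CP + CR * b ^ e2) (𝓝[>] (0:ℝ))
      (𝓝 (K * 0 - CP + CR * 0)) :=
    ((((t0 e1 he1).const_mul K).sub tendsto_const_nhds).add ((t0 e2 he2).const_mul CR))
  have hneg : K * 0 - CP + CR * 0 < 0 := by simp [hCP]
  have hev : ∀ᶠ b in 𝓝[>] (0:ℝ), K * b ^ e1 - CP + CR * b ^ e2 < 0 :=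
    t.eventually (gt_mem_nhds hneg)
  obtain ⟨b, hb1, hb2⟩ := (hev.and self_mem_nhdsWithin).exists
  exact ⟨b, hb2, hb1⟩

lemma exists_neg_energy (n : ℕ) (hn : 1 ≤ n) (p q : ℝ)
    (hp2 : 2 < p) (hpq : p < q) (hpn : p < 2 + 4 / (n : ℝ)) {c : ℝ} (hc : 0 < c) :
    ∃ u : Eu n → ℝ, inH1PQ n u ∧ massPQ n u = c ∧ energyPQ n p q u < 0 := by
  have hp0 : 0 < p := by linarith
  have hq0 : 0 < q := by linarith
  have hn0 : (0:ℝ) < n := by exact_mod_cast hn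
  have hπ : (0:ℝ) < π := Real.pi_pos
  set ν : ℝ := (n:ℝ)/2 with hν
  have hν0 : 0 < ν := by positivity
  set A : ℝ := 2*c*(2/π)^ν with hA
  have hA0 : 0 < A := by positivity
  set γ : ℝ := ν*(p-2)/2 with hγ
  set δ : ℝ := ν*(q-2)/2 with hδ
  have hγ0 : 0 < γ := by have : 0 < p - 2 := by linarith
                         positivity
  have hγ1 : γ < 1 := by
    have h1 : p - 2 < 4 / n := by linarith
    have h2 : ν * (p-2) < ν * (4 / n) := by
      exact mul_lt_mul_of_pos_left h1 hν0
    have h3 : ν * (4 / n) = 2 := by field_simp [hν]; ring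
    rw [hγ]; linarith
  have hδγ : γ < δ := by
    have : ν * (p - 2) < ν * (q - 2) := mul_lt_mul_of_pos_left (by linarith) hν0
    rw [hγ, hδ]; linarith
  set K : ℝ := 2*A*π^ν with hK
  set CP : ℝ := (1/p)*(A^(p/2)*(π/p)^ν) with hCP
  set CR : ℝ := (1/q)*(A^(q/2)*(π/q)^ν) with hCR
  have hK0 : 0 ≤ K := by positivity
  have hCP0 : 0 < CP := by positivity
  have hCR0 : 0 ≤ CR := by positivity
  obtain ⟨b, hb, hψ⟩ := exists_small_neg K CP CR (1-γ) (δ-γ) hK0 hCP0 hCR0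
    (by linarith) (by linarith)
  -- the profile
  set X : ℝ := 2*c*(2*b/π)^ν with hX
  have hX0 : 0 < X := by positivity
  set a : ℝ := X ^ ((1:ℝ)/2) with ha
  have ha0 : 0 < a := Real.rpow_pos_of_pos hX0 _
  have hbν : (0:ℝ) < b^ν := Real.rpow_pos_of_pos hb _
  -- identities
  have haX : a ^ (2:ℕ) = X := by
    rw [ha, ← Real.rpow_natCast (X ^ ((1:ℝ)/2)) 2, ← Real.rpow_mul hX0.le]
    norm_num
  have hXA : X = A * b^ν := by
    rw [hX, hA]
    have : (2*b/π) = (2/π)*b := by ring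
    rw [this, Real.mul_rpow (by positivity) hb.le]
    ring
  have harpow : ∀ r : ℝ, a ^ r = A^(r/2) * b^(ν*(r/2)) := by
    intro r
    rw [ha, ← Real.rpow_mul hX0.le, hXA, Real.mul_rpow hA0.le hbν.le,
      ← Real.rpow_mul hb.le]
    ring_nf
  -- mass
  have hmass : massPQ n (gss n a b) = c := by
    rw [gss_mass n hb, haX, hX]
    have hprod : (2*b/π)^ν * (π/(2*b))^ν = 1 := by
      rw [← Real.mul_rpow (by positivity) (by positivity),
        show (2*b/π) * (π/(2*b)) = 1 by field_simp]
      exact Real.one_rpow ν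
    calc 1/2 * (2*c*(2*b/π)^ν * (π/(2*b))^ν) = c * ((2*b/π)^ν * (π/(2*b))^ν) := by ring
      _ = c := by rw [hprod]; ring
  -- energy bound
  have hbound := gss_energy_le n ha0 hb p q hp0 hq0
  have hterm1 : 2 * a^2 * b * (π / b) ^ ν = K * b := by
    have h2 : a^2 = a^(2:ℕ) := by norm_num
    rw [h2, haX, hXA, hK]
    have : b^ν * (π/b)^ν = π^ν := by
      rw [← Real.mul_rpow hb.le (by positivity), mul_div_cancel₀ π hb.ne']
    calc 2 * (A * b^ν) * b * (π/b)^ν = 2*A*(b^ν * (π/b)^ν)*b := by ring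
      _ = 2*A*π^ν*b := by rw [this]
      _ = K*b := by rw [hK]
  have htermr : ∀ r : ℝ, 0 < r →
      (1/r) * (a ^ r * (π / (r*b)) ^ ν) = ((1/r)*(A^(r/2)*(π/r)^ν)) * b^(ν*(r/2) - ν) := by
    intro r hr
    rw [harpow r]
    have hb1 : (π/(r*b))^ν = (π/r)^ν * b^(-ν) := by
      rw [show π/(r*b) = (π/r) * b⁻¹ by rw [div_mul_eq_div_div, div_eq_mul_inv],
        Real.mul_rpow (by positivity) (inv_nonneg.2 hb.le), Real.inv_rpow hb.le,
        ← Real.rpow_neg hb.le]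
    have hb2 : b^(ν*(r/2)) * b^(-ν) = b^(ν*(r/2) - ν) := by
      rw [← Real.rpow_add hb]; ring_nf
    rw [hb1, ← hb2]; ring
  rw [← hν] at hbound
  rw [hterm1, htermr p hp0, htermr q hq0] at hbound
  have hγ' : ν*(p/2) - ν = γ := by rw [hγ]; ring
  have hδ' : ν*(q/2) - ν = δ := by rw [hδ]; ring
  rw [hγ', hδ', ← hCP, ← hCR] at hbound
  have e1 : b^γ * b^(1-γ) = b := by
    rw [← Real.rpow_add hb]
    norm_num
  have e2 : b^γ * b^(δ-γ) = b^δ := by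
    rw [← Real.rpow_add hb]; ring_nf
  have hfact : K*b - CP*b^γ + CR*b^δ = b^γ * (K*b^(1-γ) - CP + CR*b^(δ-γ)) := by
    linear_combination K * e1.symm + CR * e2.symm
  have hφ : K*b - CP*b^γ + CR*b^δ < 0 := by
    rw [hfact]
    exact mul_neg_of_pos_of_neg (Real.rpow_pos_of_pos hb γ) hψ
  exact ⟨gss n a b, gss_inH1 n ha0 hb, hmass, by linarith⟩

lemma pointwise_bound {p q : ℝ} (hp2 : 2 < p) (hpq : p < q) :
    ∃ C : ℝ, 0 < C ∧ ∀ t : ℝ, 0 ≤ t →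
      -C * t ^ (2:ℕ) ≤ -(1/p) * t ^ p + (1/q) * t ^ q := by
  have hp0 : 0 < p := by linarith
  have hq0 : 0 < q := by linarith
  have hqp1 : 1 < q / p := (one_lt_div hp0).2 hpq
  obtain ⟨T, hT⟩ : ∃ T : ℝ, T = (q/p) ^ (q - p)⁻¹ := ⟨_, rfl⟩
  have hT1 : 1 ≤ T := hT ▸ Real.one_le_rpow hqp1.le (inv_nonneg.2 (by linarith))
  have hT0 : 0 < T := lt_of_lt_of_le one_pos hT1
  have hTp : 0 ≤ T ^ p := Real.rpow_nonneg hT0.le p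
  refine ⟨(1/p) * (1 + T ^ p), by positivity, fun t ht => ?_⟩
  have hcast : t ^ (2:ℕ) = t ^ (2:ℝ) := (Real.rpow_natCast t 2).symm
  rw [hcast]
  rcases eq_or_lt_of_le ht with h0 | h0
  · simp [← h0, Real.zero_rpow hp0.ne', Real.zero_rpow hq0.ne',
      Real.zero_rpow (by norm_num : (2:ℝ) ≠ 0)]
  have htp : 0 ≤ t ^ p := Real.rpow_nonneg ht p
  have htq : 0 ≤ (1/q) * t ^ q := by positivity
  have ht2 : 0 ≤ t ^ (2:ℝ) := Real.rpow_nonneg ht 2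
  have hp1 : (0:ℝ) < 1/p := by positivity
  have hD : 0 ≤ (1/p) * T^p * t^(2:ℝ) := by positivity
  have hC : 0 ≤ (1/p) * t^(2:ℝ) := by positivity
  rcases le_total t 1 with h1 | h1
  · have hA : (1/p) * t ^ p ≤ (1/p) * t ^ (2:ℝ) :=
      mul_le_mul_of_nonneg_left (Real.rpow_le_rpow_of_exponent_ge h0 h1 hp2.le) hp1.le
    linarith
  have h12 : (1:ℝ) ≤ t ^ (2:ℝ) := Real.one_le_rpow h1 (by norm_num)
  rcases le_total t T with h2 | h2
  · have hA : (1/p) * t ^ p ≤ (1/p) * T ^ p :=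
      mul_le_mul_of_nonneg_left (Real.rpow_le_rpow h0.le h2 hp0.le) hp1.le
    have hB : (1/p) * T^p * 1 ≤ (1/p) * T^p * t^(2:ℝ) :=
      mul_le_mul_of_nonneg_left h12 (by positivity)
    linarith
  · have hTqp : T ^ (q - p) = q / p := by
      rw [hT]; exact Real.rpow_inv_rpow (by positivity) (by linarith)
    have h3 : q / p ≤ t ^ (q - p) := by
      rw [← hTqp]; exact Real.rpow_le_rpow hT0.le h2 (by linarith)
    have h4 : t ^ q = t ^ p * t ^ (q - p) := by
      rw [← Real.rpow_add h0]; ring_nf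
    have h5 : (1/p) * t ^ p ≤ (1/q) * t ^ q := by
      have hm : t^p * (q/p) ≤ t^p * t^(q-p) := mul_le_mul_of_nonneg_left h3 htp
      have he : (1/p)*t^p = (1/q)*(t^p*(q/p)) := by field_simp
      rw [he, h4]; exact mul_le_mul_of_nonneg_left hm (by positivity)
    linarith

lemma bddBelow_energySet (n : ℕ) (p q : ℝ) (hp2 : 2 < p) (hpq : p < q) {c : ℝ} (hc : 0 < c) :
    BddBelow (energyPQ n p q '' {u | inH1PQ n u ∧ massPQ n u = c}) := by
  obtain ⟨C, hC0, hC⟩ := pointwise_bound hp2 hpq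
  refine ⟨-(2*C*c), fun y hy => ?_⟩
  obtain ⟨u, ⟨hu, hm⟩, rfl⟩ := hy
  by_cases hInt : Integrable (fun x : Eu n =>
      (1/2) * ‖fderiv ℝ u x‖ ^ 2 - (1/p) * |u x| ^ p + (1/q) * |u x| ^ q) volume
  · have husq : Integrable (fun x : Eu n => (u x)^2) volume := hu.2.1.integrable_sq
    have hlow : ∀ x : Eu n, -C * (u x)^2 ≤
        (1/2) * ‖fderiv ℝ u x‖ ^ 2 - (1/p) * |u x| ^ p + (1/q) * |u x| ^ q := by
      intro x
      have h := hC |u x| (abs_nonneg _)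
      have h2 : |u x| ^ (2:ℕ) = (u x)^2 := sq_abs (u x)
      have h3 : (0:ℝ) ≤ (1/2) * ‖fderiv ℝ u x‖ ^ 2 := by positivity
      rw [h2] at h
      linarith
    have hmono := integral_mono (husq.const_mul (-C)) hInt (fun x => hlow x)
    have hm2 : ∫ x : Eu n, (u x)^2 = 2*c := by
      rw [massPQ] at hm; linarith
    rw [integral_const_mul, hm2] at hmono
    have hE : energyPQ n p q u = ∫ x : Eu n,
        ((1/2) * ‖fderiv ℝ u x‖ ^ 2 - (1/p) * |u x| ^ p + (1/q) * |u x| ^ q) := rfl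
    rw [hE]; linarith
  · have hE : energyPQ n p q u = 0 := integral_undef hInt
    rw [hE]
    have : (0:ℝ) < 2*C*c := by positivity
    linarith

section Scaling

variable {n : ℕ} {u : EuclideanSpace ℝ (Fin n) → ℝ} {l : ℝ}

lemma scale_hasFDerivAt (hu : inH1PQ n u) (x : Eu n) :
    HasFDerivAt (fun x : Eu n => u (l⁻¹ • x)) (l⁻¹ • fderiv ℝ u (l⁻¹ • x)) x := by
  have hg : HasFDerivAt (fun x : Eu n => l⁻¹ • x)
      (l⁻¹ • ContinuousLinearMap.id ℝ (Eu n)) x := (hasFDerivAt_id x).const_smul l⁻¹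
  have h := ((hu.1 (l⁻¹ • x)).hasFDerivAt).comp x hg
  have heq : (fderiv ℝ u (l⁻¹ • x)).comp (l⁻¹ • ContinuousLinearMap.id ℝ (Eu n))
      = l⁻¹ • fderiv ℝ u (l⁻¹ • x) := by
    ext y; simp
  rwa [heq] at h

lemma integral_comp_smul_inv (hl : 0 < l) (f : Eu n → ℝ) :
    ∫ x : Eu n, f (l⁻¹ • x) = l^n * ∫ x : Eu n, f x := by
  rw [Measure.integral_comp_smul volume f l⁻¹]
  rw [inv_pow, inv_inv, finrank_euclideanSpace_fin, abs_of_pos (by positivity), smul_eq_mul]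

lemma scale_all (p q : ℝ) (hu : inH1PQ n u) (hl : 1 ≤ l)
    (hIu : Integrable (fun x : Eu n =>
      (1/2) * ‖fderiv ℝ u x‖ ^ 2 - (1/p) * |u x| ^ p + (1/q) * |u x| ^ q) volume) :
    inH1PQ n (fun x : Eu n => u (l⁻¹ • x)) ∧
    massPQ n (fun x : Eu n => u (l⁻¹ • x)) = l^n * massPQ n u ∧
    energyPQ n p q (fun x : Eu n => u (l⁻¹ • x)) ≤ l^n * energyPQ n p q u := by
  have hl0 : 0 < l := lt_of_lt_of_le one_pos hl
  have hlinv : l⁻¹ ≠ 0 := inv_ne_zero hl0.ne'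
  have hfv : ∀ x : Eu n, fderiv ℝ (fun x : Eu n => u (l⁻¹ • x)) x
      = l⁻¹ • fderiv ℝ u (l⁻¹ • x) := fun x => (scale_hasFDerivAt hu x).fderiv
  have hnv : ∀ x : Eu n, ‖fderiv ℝ (fun x : Eu n => u (l⁻¹ • x)) x‖^2
      = l⁻¹^2 * ‖fderiv ℝ u (l⁻¹ • x)‖^2 := by
    intro x
    rw [hfv, norm_smul, Real.norm_eq_abs, abs_of_pos (by positivity), mul_pow]
  have hvd : Differentiable ℝ (fun x : Eu n => u (l⁻¹ • x)) :=
    fun x => (scale_hasFDerivAt hu x).differentiableAt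
  have huf_sq : Integrable (fun y : Eu n => ‖fderiv ℝ u y‖^2) volume :=
    (memLp_two_iff_integrable_sq_norm hu.2.2.aestronglyMeasurable).1 hu.2.2
  have hT0 : 0 ≤ ∫ y : Eu n, ‖fderiv ℝ u y‖^2 :=
    integral_nonneg (fun y => by positivity)
  refine ⟨⟨hvd, ?_, ?_⟩, ?_, ?_⟩
  · rw [memLp_two_iff_integrable_sq hvd.continuous.aestronglyMeasurable]
    exact (hu.2.1.integrable_sq).comp_smul hlinv
  · have hmeas : AEStronglyMeasurable
        (fun x : Eu n => fderiv ℝ (fun x : Eu n => u (l⁻¹ • x)) x) volume := by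
      have : (fun x : Eu n => fderiv ℝ (fun x : Eu n => u (l⁻¹ • x)) x)
          = fun x : Eu n => l⁻¹ • fderiv ℝ u (l⁻¹ • x) := funext hfv
      rw [this]
      exact (((measurable_fderiv ℝ u).comp (measurable_const_smul l⁻¹)).const_smul
        l⁻¹).aestronglyMeasurable
    rw [memLp_two_iff_integrable_sq_norm hmeas]
    have hI : Integrable (fun x : Eu n => l⁻¹^2 * ‖fderiv ℝ u (l⁻¹ • x)‖^2) volume :=
      (huf_sq.comp_smul hlinv).const_mul _
    exact hI.congr (Filter.EventuallyEq.of_eq (funext fun x => (hnv x).symm))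
  · rw [massPQ, massPQ]
    simp only [integral_comp_smul_inv hl0 (fun y : Eu n => (u y)^2)]
    ring
  · -- energy
    have hEv : energyPQ n p q (fun x : Eu n => u (l⁻¹ • x))
        = ∫ x : Eu n, ((1/2) * (l⁻¹^2 * ‖fderiv ℝ u (l⁻¹ • x)‖ ^ 2)
            - (1/p) * |u (l⁻¹ • x)| ^ p + (1/q) * |u (l⁻¹ • x)| ^ q) := by
      unfold energyPQ
      congr 1
      funext x
      rw [hnv]
    rw [hEv]
    simp only [integral_comp_smul_inv hl0 (fun y : Eu n => (1/2) * (l⁻¹^2 * ‖fderiv ℝ u y‖ ^ 2)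
            - (1/p) * |u y| ^ p + (1/q) * |u y| ^ q)]
    have hsplit : ∫ y : Eu n, ((1/2) * (l⁻¹^2 * ‖fderiv ℝ u y‖ ^ 2)
            - (1/p) * |u y| ^ p + (1/q) * |u y| ^ q)
        = energyPQ n p q u - ((1/2)*(1 - l⁻¹^2)) * ∫ y : Eu n, ‖fderiv ℝ u y‖^2 := by
      have hpt : (fun y : Eu n => (1/2) * (l⁻¹^2 * ‖fderiv ℝ u y‖ ^ 2)
            - (1/p) * |u y| ^ p + (1/q) * |u y| ^ q)
          = fun y : Eu n => ((1/2) * ‖fderiv ℝ u y‖ ^ 2 - (1/p) * |u y| ^ p + (1/q) * |u y| ^ q)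
              - ((1/2)*(1 - l⁻¹^2)) * ‖fderiv ℝ u y‖^2 := by
        funext y; ring
      rw [hpt, integral_sub hIu (huf_sq.const_mul _), integral_const_mul]
      rfl
    rw [hsplit]
    have hs : 0 ≤ ((1/2)*(1 - l⁻¹^2)) * ∫ y : Eu n, ‖fderiv ℝ u y‖^2 := by
      apply mul_nonneg _ hT0
      have : l⁻¹ ≤ 1 := inv_le_one_of_one_le₀ hl
      have h2 : l⁻¹^2 ≤ 1 := by nlinarith [inv_pos.2 hl0]
      linarith
    have hln : (0:ℝ) ≤ l^n := by positivity
    nlinarith [mul_le_mul_of_nonneg_left (by linarith : energyPQ n p q u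
        - ((1/2)*(1 - l⁻¹^2)) * ∫ y : Eu n, ‖fderiv ℝ u y‖^2 ≤ energyPQ n p q u) hln]

end Scaling


end Aux19

/-- for `V ≡ 0` and `f(u) = |u|^{p-2}u - |u|^{q-2}u` with
`2 < p < q` and `p < 2 + 4/n`, one has `-∞ < m(c) < 0` for every `c > 0`, and `m` is
strictly decreasing on `]0,∞[`. -/
theorem statement19 (n : ℕ) (hn : 1 ≤ n) (p q : ℝ)
    (hp2 : 2 < p) (hpq : p < q) (hpn : p < 2 + 4 / (n : ℝ)) :
    (∀ c : ℝ, 0 < c →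
      BddBelow (energyPQ n p q '' {u | inH1PQ n u ∧ massPQ n u = c}) ∧
      minEPQ n p q c < 0) ∧
    StrictAntiOn (minEPQ n p q) (Ioi 0) := by
  have hneg : ∀ c : ℝ, 0 < c → minEPQ n p q c < 0 := by
    intro c hc
    obtain ⟨u, hu, hm, hE⟩ := exists_neg_energy n hn p q hp2 hpq hpn hc
    have hmem : energyPQ n p q u ∈ energyPQ n p q '' {u | inH1PQ n u ∧ massPQ n u = c} :=
      ⟨u, ⟨hu, hm⟩, rfl⟩
    exact lt_of_le_of_lt (csInf_le (bddBelow_energySet n p q hp2 hpq hc) hmem) hE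
  refine ⟨fun c hc => ⟨bddBelow_energySet n p q hp2 hpq hc, hneg c hc⟩, ?_⟩
  intro c hcmem c' hc'mem hlt
  have hc : (0:ℝ) < c := hcmem
  have hc' : (0:ℝ) < c' := hc'mem
  have hrat : 1 < c'/c := (one_lt_div hc).2 hlt
  have hn0 : (0:ℝ) < (n:ℝ) := by exact_mod_cast hn
  obtain ⟨l, hldef⟩ : ∃ l : ℝ, l = (c'/c) ^ ((n:ℝ)⁻¹) := ⟨_, rfl⟩
  have hl1 : 1 < l := by
    rw [hldef]
    exact (Real.one_lt_rpow_iff_of_pos (by positivity)).2 (Or.inl ⟨hrat, by positivity⟩)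
  have hl0 : (0:ℝ) < l := lt_trans one_pos hl1
  have hln : l ^ (n:ℕ) = c'/c := by
    rw [hldef]
    exact Real.rpow_inv_natCast_pow (by positivity) (by omega)
  have hK1 : 1 < l ^ (n:ℕ) := by rw [hln]; exact hrat
  have hK0 : (0:ℝ) < l ^ (n:ℕ) := by positivity
  have NEc : (energyPQ n p q '' {u | inH1PQ n u ∧ massPQ n u = c}).Nonempty := by
    obtain ⟨u, hu, hm, _⟩ := exists_neg_energy n hn p q hp2 hpq hpn hc
    exact ⟨energyPQ n p q u, u, ⟨hu, hm⟩, rfl⟩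
  have hmc_neg : minEPQ n p q c < 0 := hneg c hc
  have hle : minEPQ n p q c' ≤ l ^ (n:ℕ) * minEPQ n p q c := by
    refine le_of_forall_pos_le_add fun ε hε => ?_
    have hεK : 0 < ε / l ^ (n:ℕ) := by positivity
    have hb0 : minEPQ n p q c < min (minEPQ n p q c + ε / l ^ (n:ℕ)) 0 :=
      lt_min (by linarith) hmc_neg
    obtain ⟨y, hy, hylt⟩ := exists_lt_of_csInf_lt NEc hb0
    obtain ⟨u, ⟨hu, hm⟩, rfl⟩ := hy
    have hEu_neg : energyPQ n p q u < 0 := lt_of_lt_of_le hylt (min_le_right _ _)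
    have hIu : Integrable (fun x : Eu n =>
        (1/2) * ‖fderiv ℝ u x‖ ^ 2 - (1/p) * |u x| ^ p + (1/q) * |u x| ^ q) volume := by
      by_contra h
      have h0 : energyPQ n p q u = 0 := integral_undef h
      rw [h0] at hEu_neg
      exact absurd hEu_neg (lt_irrefl 0)
    obtain ⟨hv1, hv2, hv3⟩ := scale_all p q hu hl1.le hIu
    have hmass' : massPQ n (fun x : Eu n => u (l⁻¹ • x)) = c' := by
      rw [hv2, hm, hln, div_mul_cancel₀ _ hc.ne']
    have hmem' : energyPQ n p q (fun x : Eu n => u (l⁻¹ • x)) ∈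
        energyPQ n p q '' {u | inH1PQ n u ∧ massPQ n u = c'} :=
      ⟨_, ⟨hv1, hmass'⟩, rfl⟩
    have h1 : minEPQ n p q c' ≤ energyPQ n p q (fun x : Eu n => u (l⁻¹ • x)) :=
      csInf_le (bddBelow_energySet n p q hp2 hpq hc') hmem'
    have h2 : energyPQ n p q u ≤ minEPQ n p q c + ε / l ^ (n:ℕ) :=
      le_of_lt (lt_of_lt_of_le hylt (min_le_left _ _))
    have h3 : l ^ (n:ℕ) * energyPQ n p q u
        ≤ l ^ (n:ℕ) * (minEPQ n p q c + ε / l ^ (n:ℕ)) :=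
      mul_le_mul_of_nonneg_left h2 hK0.le
    have h4 : l ^ (n:ℕ) * (minEPQ n p q c + ε / l ^ (n:ℕ))
        = l ^ (n:ℕ) * minEPQ n p q c + ε := by field_simp [mul_comm]
    linarith
  have hfin : l ^ (n:ℕ) * minEPQ n p q c < minEPQ n p q c := by
    nlinarith [mul_pos (sub_pos.2 hK1) (neg_pos.2 hmc_neg)]
  exact lt_of_le_of_lt hle hfin
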